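/- Existence and uniqueness of BSΔE solutions: For an HMM(μ,A,C) with all finite-horizon observation sequences and given adapted input U ∈ 𝒰 and σ(Z_1,...,Z_T)-measurable terminal condition F, there exists a unique adapted pair (Y,V) = {(Y_t(x), V_t(x)) : x ∈ 𝕊, 0 ≤ t ≤ T−1} solving the backward stochastic difference equation Y_t(x) = (A Y_{t+1})(x) + c(x)ᵀ(U_t + V_t(x)) − V_t(x)ᵀ e(Z_{t+1}) with Y_T = F (uniqueness on paths of positive probability, with V_t normalized to be adapted). -/
import Mathlib

open Finset

/-- Lattice embedding: `e i` is the `i`-th canonical basis vector of `ℝ^m` for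
`1 ≤ i ≤ m`, and `e 0 = -(e 1 + ⋯ + e m)`. -/
def eVec (m : ℕ) (z : Fin (m + 1)) : Fin m → ℝ :=
  fun j => if z.val = 0 then -1 else if z.val = j.val + 1 then 1 else 0

/-- Restriction of a path to its first `t` coordinates. -/
def restrict {T : ℕ} {α : Type*} (zp : Fin T → α) (t : ℕ) (ht : t ≤ T) : Fin t → α :=
  fun s => zp ⟨s.val, lt_of_lt_of_le s.isLt ht⟩

/-- `c(x)_i = C(x,i) - C(x,0)`. -/
noncomputable def cvec (d m : ℕ) (C : Fin d → Fin (m + 1) → ℝ) (x : Fin d) : Fin m → ℝ :=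
  fun i => C x i.succ - C x 0

/- ### auxiliary lemmas -/

lemma sum_mul_eVec_zero {m : ℕ} (D : Fin m → ℝ) :
    ∑ i, D i * eVec m 0 i = -∑ i, D i := by
  simp [eVec]

lemma sum_mul_eVec_succ {m : ℕ} (D : Fin m → ℝ) (j : Fin m) :
    ∑ i, D i * eVec m j.succ i = D j := by
  have h : ∀ i : Fin m, eVec m j.succ i = if i = j then 1 else 0 := by
    intro i
    simp only [eVec, Fin.val_succ, Nat.succ_ne_zero, if_false, Nat.add_right_cancel_iff]
    by_cases hij : i = j
    · simp [hij]
    · rw [if_neg, if_neg hij]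
      exact fun hv => hij (Fin.ext hv.symm)
  simp [h]

lemma eVec_decomp {m : ℕ} (G : Fin (m + 1) → ℝ) (z : Fin (m + 1)) :
    G z = (∑ w, G w) / (m + 1) +
      ∑ i, (G i.succ - (∑ w, G w) / (m + 1)) * eVec m z i := by
  have hm : ((m : ℝ) + 1) ≠ 0 := by positivity
  have ha : ((m : ℝ) + 1) * ((∑ w, G w) / (m + 1)) = ∑ w, G w := by field_simp
  induction z using Fin.cases with
  | zero =>
    rw [sum_mul_eVec_zero]
    have hs : ∑ w, G w = G 0 + ∑ i : Fin m, G i.succ := Fin.sum_univ_succ G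
    rw [Finset.sum_sub_distrib, Finset.sum_const, card_univ, Fintype.card_fin,
      nsmul_eq_mul]
    linarith
  | succ j =>
    rw [sum_mul_eVec_succ]
    ring

lemma affine_zero {m : ℕ} (δ : ℝ) (c D : Fin m → ℝ)
    (h : ∀ z : Fin (m + 1), δ = (∑ i, c i * D i) - ∑ i, D i * eVec m z i) :
    δ = 0 ∧ ∀ i, D i = 0 := by
  have h0 := h 0
  rw [sum_mul_eVec_zero] at h0
  have hj : ∀ j, D j = (∑ i, c i * D i) - δ := by
    intro j
    have := h j.succ
    rw [sum_mul_eVec_succ] at this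
    linarith
  set r := (∑ i, c i * D i) - δ with hr
  have hsum : ∑ i, D i = (m : ℝ) * r := by
    rw [Finset.sum_congr rfl (fun i _ => hj i), Finset.sum_const, card_univ,
      Fintype.card_fin, nsmul_eq_mul]
  have hr0 : r * ((m : ℝ) + 1) = 0 := by
    have : δ = (∑ i, c i * D i) + ∑ i, D i := by linarith
    rw [hsum] at this
    ring_nf
    nlinarith [this]
  have hrz : r = 0 := by
    rcases mul_eq_zero.1 hr0 with h' | h'
    · exact h'
    · exact absurd h' (by positivity)
  have hD : ∀ i, D i = 0 := fun i => (hj i).trans hrz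
  refine ⟨?_, hD⟩
  have : ∑ i, c i * D i = 0 := by
    apply Finset.sum_eq_zero
    intro i _
    rw [hD i, mul_zero]
  have hδ : (∑ i, c i * D i) - δ = 0 := by rw [← hr]; exact hrz
  linarith

section

variable (d m T : ℕ) (A : Matrix (Fin d) (Fin d) ℝ) (C : Fin d → Fin (m + 1) → ℝ)
  (U : (t : Fin T) → (Fin t.val → Fin (m + 1)) → Fin m → ℝ)
  (F : (Fin T → Fin (m + 1)) → Fin d → ℝ)

noncomputable def Ysol : (t : ℕ) → (Fin t → Fin (m + 1)) → Fin d → ℝ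
  | t =>
    if h : t < T then fun p x =>
      (∑ z, ∑ y, A x y * Ysol (t + 1) (Fin.snoc p z) y) / (m + 1) +
      ∑ i, cvec d m C x i * (U ⟨t, h⟩ p i +
        ((∑ y, A x y * Ysol (t + 1) (Fin.snoc p i.succ) y) -
         (∑ z, ∑ y, A x y * Ysol (t + 1) (Fin.snoc p z) y) / (m + 1)))
    else fun p x => F (fun s => p ⟨s.val, lt_of_lt_of_le s.isLt (le_of_not_gt h)⟩) x
  termination_by t => T - t
  decreasing_by all_goals omega

noncomputable def Vsol (t : Fin T) (p : Fin t.val → Fin (m + 1)) (x : Fin d)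
    (i : Fin m) : ℝ :=
  (∑ y, A x y * Ysol d m T A C U F (t.val + 1) (Fin.snoc p i.succ) y) -
  (∑ z, ∑ y, A x y * Ysol d m T A C U F (t.val + 1) (Fin.snoc p z) y) / (m + 1)

lemma Ysol_T (p : Fin T → Fin (m + 1)) (x : Fin d) :
    Ysol d m T A C U F T p x = F p x := by
  rw [Ysol]
  rw [dif_neg (lt_irrefl T)]

lemma Ysol_lt (t : ℕ) (h : t < T) (p : Fin t → Fin (m + 1)) (x : Fin d) :
    Ysol d m T A C U F t p x =
      (∑ z, ∑ y, A x y * Ysol d m T A C U F (t + 1) (Fin.snoc p z) y) / (m + 1) +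
      ∑ i, cvec d m C x i * (U ⟨t, h⟩ p i +
        ((∑ y, A x y * Ysol d m T A C U F (t + 1) (Fin.snoc p i.succ) y) -
         (∑ z, ∑ y, A x y * Ysol d m T A C U F (t + 1) (Fin.snoc p z) y) / (m + 1))) := by
  conv_lhs => rw [Ysol]
  rw [dif_pos h]

end

lemma restrict_succ' {T : ℕ} {α : Type*} (zp : Fin T → α) (t : Fin T)
    (h : t.val + 1 ≤ T) :
    _root_.restrict zp (t.val + 1) h =
      Fin.snoc (_root_.restrict zp t.val t.isLt.le) (zp t) := by
  funext s
  induction s using Fin.lastCases with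
  | last => simp [_root_.restrict, Fin.snoc_last, Fin.eta]
  | cast j => simp [_root_.restrict, Fin.snoc_castSucc]

section

variable (d m T : ℕ) (A : Matrix (Fin d) (Fin d) ℝ) (C : Fin d → Fin (m + 1) → ℝ)
  (U : (t : Fin T) → (Fin t.val → Fin (m + 1)) → Fin m → ℝ)
  (F : (Fin T → Fin (m + 1)) → Fin d → ℝ)

lemma sol_eq (zp : Fin T → Fin (m + 1)) (t : Fin T) (x : Fin d) :
    Ysol d m T A C U F t.val (restrict zp t.val t.isLt.le) x =
      (∑ y, A x y * Ysol d m T A C U F (t.val + 1) (restrict zp (t.val + 1) t.isLt) y) +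
      (∑ i, cvec d m C x i *
        (U t (restrict zp t.val t.isLt.le) i +
         Vsol d m T A C U F t (restrict zp t.val t.isLt.le) x i)) -
      ∑ i, Vsol d m T A C U F t (restrict zp t.val t.isLt.le) x i * eVec m (zp t) i := by
  rw [restrict_succ' zp t t.isLt, Ysol_lt d m T A C U F t.val t.isLt]
  simp only [Vsol, Fin.eta]
  have hd := eVec_decomp
    (fun z => ∑ y, A x y *
      Ysol d m T A C U F (t.val + 1) (Fin.snoc (_root_.restrict zp t.val t.isLt.le) z) y)
    (zp t)
  linarith [hd]

/-- the equation at a fixed history and observation, for any solution -/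
lemma eq_at (Y1 : (t : Fin (T + 1)) → (Fin t.val → Fin (m + 1)) → Fin d → ℝ)
    (V1 : (t : Fin T) → (Fin t.val → Fin (m + 1)) → Fin d → Fin m → ℝ)
    (heq : ∀ (zp : Fin T → Fin (m + 1)) (t : Fin T) (x : Fin d),
      Y1 t.castSucc (restrict zp t.val t.isLt.le) x =
        (∑ y, A x y * Y1 t.succ (restrict zp (t.val + 1) t.isLt) y) +
        (∑ i, cvec d m C x i *
          (U t (restrict zp t.val t.isLt.le) i +
           V1 t (restrict zp t.val t.isLt.le) x i)) -
        ∑ i, V1 t (restrict zp t.val t.isLt.le) x i * eVec m (zp t) i)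
    (t : Fin T) (p : Fin t.val → Fin (m + 1)) (x : Fin d) (z : Fin (m + 1)) :
    Y1 t.castSucc p x =
      (∑ y, A x y * Y1 t.succ (Fin.snoc p z) y) +
      (∑ i, cvec d m C x i * (U t p i + V1 t p x i)) -
      ∑ i, V1 t p x i * eVec m z i := by
  set zp : Fin T → Fin (m + 1) :=
    fun s => if h : s.val < t.val then p ⟨s.val, h⟩ else z with hzp
  have h1 : _root_.restrict zp t.val t.isLt.le = p := by
    funext s
    show (if h : s.val < t.val then p ⟨s.val, h⟩ else z) = p s
    rw [dif_pos s.isLt]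
  have h2 : zp t = z := by
    show (if h : t.val < t.val then p ⟨t.val, h⟩ else z) = z
    rw [dif_neg (lt_irrefl _)]
  have h3 : _root_.restrict zp (t.val + 1) t.isLt = Fin.snoc p z := by
    rw [restrict_succ' zp t t.isLt, h1, h2]
  have h := heq zp t x
  rw [h1, h2, h3] at h
  exact h

end

/-- Existence and uniqueness of (adapted) solutions of the BSΔE
`Y_t(x) = (AY_{t+1})(x) + c(x)ᵀ(U_t + V_t(x)) - V_t(x)ᵀ e(Z_{t+1})`, `Y_T = F`,
for a given adapted input `U` and `σ(Z_1,…,Z_T)`-measurable terminal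
condition `F`.  Adaptedness is encoded by letting `Y_t, V_t` be functions of the
observation history `(z_1,…,z_t)`. -/
theorem bsde_existence_uniqueness (d m T : ℕ)
    (A : Matrix (Fin d) (Fin d) ℝ) (C : Fin d → Fin (m + 1) → ℝ)
    (U : (t : Fin T) → (Fin t.val → Fin (m + 1)) → Fin m → ℝ)
    (F : (Fin T → Fin (m + 1)) → Fin d → ℝ) :
    ∃! YV : ((t : Fin (T + 1)) → (Fin t.val → Fin (m + 1)) → Fin d → ℝ) ×
            ((t : Fin T) → (Fin t.val → Fin (m + 1)) → Fin d → Fin m → ℝ),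
      YV.1 (Fin.last T) = F ∧
      ∀ (zp : Fin T → Fin (m + 1)) (t : Fin T) (x : Fin d),
        YV.1 t.castSucc (restrict zp t.val t.isLt.le) x =
          (∑ y, A x y * YV.1 t.succ (restrict zp (t.val + 1) t.isLt) y) +
          (∑ i, cvec d m C x i *
            (U t (restrict zp t.val t.isLt.le) i +
             YV.2 t (restrict zp t.val t.isLt.le) x i)) -
          ∑ i, YV.2 t (restrict zp t.val t.isLt.le) x i * eVec m (zp t) i := by
  refine ⟨⟨fun t => Ysol d m T A C U F t.val, Vsol d m T A C U F⟩, ⟨?_, ?_⟩, ?_⟩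
  · funext p x
    exact Ysol_T d m T A C U F p x
  · exact sol_eq d m T A C U F
  · rintro pair ⟨hF, heq⟩
    have hpair := eq_at d m T A C U pair.1 pair.2 heq
    have hsol := eq_at d m T A C U (fun t => Ysol d m T A C U F t.val)
      (Vsol d m T A C U F) (sol_eq d m T A C U F)
    have hY : ∀ t : Fin (T + 1), pair.1 t = fun p => Ysol d m T A C U F t.val p := by
      suffices hk : ∀ k (t : Fin (T + 1)), T ≤ t.val + k →
          pair.1 t = fun p => Ysol d m T A C U F t.val p by
        intro t
        exact hk T t (by omega)
      intro k
      induction k with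
      | zero =>
        intro t ht
        have htv : t.val = T := by omega
        have ht' : t = Fin.last T := Fin.ext htv
        rw [ht', hF]
        funext p x
        exact (Ysol_T d m T A C U F p x).symm
      | succ k ih =>
        intro t ht
        by_cases h : T ≤ t.val + k
        · exact ih t h
        · have htT : t.val < T := by omega
          have hcast : t = (⟨t.val, htT⟩ : Fin T).castSucc := Fin.ext rfl
          have hsucc : pair.1 (⟨t.val, htT⟩ : Fin T).succ =
              fun p => Ysol d m T A C U F (t.val + 1) p :=
            ih (⟨t.val, htT⟩ : Fin T).succ (by simp [Fin.val_succ]; omega)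
          rw [hcast]
          funext p x
          have hrel : ∀ z : Fin (m + 1),
              pair.1 (⟨t.val, htT⟩ : Fin T).castSucc p x -
                Ysol d m T A C U F t.val p x =
              (∑ i, cvec d m C x i *
                (pair.2 ⟨t.val, htT⟩ p x i - Vsol d m T A C U F ⟨t.val, htT⟩ p x i)) -
              ∑ i, (pair.2 ⟨t.val, htT⟩ p x i - Vsol d m T A C U F ⟨t.val, htT⟩ p x i) *
                eVec m z i := by
            intro z
            have e1 := hpair ⟨t.val, htT⟩ p x z
            have e2 := hsol ⟨t.val, htT⟩ p x z
            simp only [hsucc] at e1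
            simp only [Fin.coe_castSucc, Fin.val_succ] at e1 e2
            simp only [mul_add, mul_sub, sub_mul, Finset.sum_add_distrib,
              Finset.sum_sub_distrib] at e1 e2 ⊢
            linarith
          have := (affine_zero _ (cvec d m C x)
            (fun i => pair.2 ⟨t.val, htT⟩ p x i - Vsol d m T A C U F ⟨t.val, htT⟩ p x i)
            hrel).1
          simp only [Fin.coe_castSucc]
          linarith
    have hV : pair.2 = Vsol d m T A C U F := by
      funext t p x i
      have hrel : ∀ z : Fin (m + 1),
          (0 : ℝ) =
          (∑ i, cvec d m C x i * (pair.2 t p x i - Vsol d m T A C U F t p x i)) -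
          ∑ i, (pair.2 t p x i - Vsol d m T A C U F t p x i) * eVec m z i := by
        intro z
        have e1 := hpair t p x z
        have e2 := hsol t p x z
        simp only [hY t.succ, hY t.castSucc] at e1
        simp only [Fin.coe_castSucc, Fin.val_succ] at e1 e2
        simp only [mul_add, mul_sub, sub_mul, Finset.sum_add_distrib,
          Finset.sum_sub_distrib] at e1 e2 ⊢
        linarith
      have := (affine_zero _ (cvec d m C x)
        (fun i => pair.2 t p x i - Vsol d m T A C U F t p x i) hrel).2 i
      linarith
    refine Prod.ext ?_ hV
    funext t
    exact hY t
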